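/- The maximum value of the Lobachevsky function relates to its value at π/3 by Λ(π/6) = (3/2) Λ(π/3). -/

import Mathlib

open MeasureTheory Real

/-- The Lobachevsky function `Λ(θ) = -∫₀^θ log |2 sin t| dt`. -/
noncomputable def lobachevsky (θ : ℝ) : ℝ :=
  -∫ t in (0:ℝ)..θ, Real.log |2 * Real.sin t|

/-!
Substituting `t = 2s` and splitting `log |2 sin 2s| = log |2 sin s| + log |2 cos s|` gives
`Λ(2θ) = 2Λ(θ) + 2(Λ(θ + π/2) - Λ(π/2))`. At `θ = π/2` this forces `Λ(π) = 0`, so the symmetry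
`t ↦ π - t` of the integrand yields `Λ(π - θ) = -Λ(θ)`, hence `Λ(π/2) = 0`. Duplication at `π/6`
then reads `Λ(π/3) = 2Λ(π/6) + 2Λ(2π/3) = 2Λ(π/6) - 2Λ(π/3)`.
-/

theorem intervalIntegrable_log_abs_two_mul_sin (a b : ℝ) :
    IntervalIntegrable (fun t => log |2 * sin t|) volume a b := by
  simpa only [norm_eq_abs] using
    (analyticOnNhd_const.mul analyticOnNhd_sin).meromorphicOn.intervalIntegrable_log_norm
      (f := fun t => 2 * sin t)

theorem log_abs_two_mul_sin_two_mul {s : ℝ} (hs : sin (2 * s) ≠ 0) :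
    log |2 * sin (2 * s)| = log |2 * sin s| + log |2 * sin (s + π / 2)| := by
  rw [sin_two_mul] at hs
  rw [sin_add_pi_div_two, ← log_mul (by simp_all) (by simp_all), ← abs_mul, sin_two_mul]
  ring_nf

-- Only almost everywhere: at the zeros of `sin s` or `cos s` the junk value `log 0 = 0` breaks it.
theorem ae_log_abs_two_mul_sin_two_mul :
    ∀ᵐ s : ℝ, log |2 * sin (2 * s)| = log |2 * sin s| + log |2 * sin (s + π / 2)| := by
  have hzeros : {s : ℝ | sin (2 * s) = 0}.Countable := by
    refine (Set.countable_range fun n : ℤ => n * π / 2).mono fun s hs => ?_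
    obtain ⟨n, hn⟩ := sin_eq_zero_iff.mp hs
    exact ⟨n, by linarith⟩
  filter_upwards [measure_eq_zero_iff_ae_notMem.mp (hzeros.measure_zero volume)] with s hs
  exact log_abs_two_mul_sin_two_mul hs

theorem lobachevsky_two_mul_sub (θ : ℝ) :
    lobachevsky (2 * θ) =
      2 * lobachevsky θ + 2 * (lobachevsky (θ + π / 2) - lobachevsky (π / 2)) := by
  have hII := intervalIntegrable_log_abs_two_mul_sin
  have hsplit : ∫ s in (0:ℝ)..θ, log |2 * sin (2 * s)| =
      (∫ s in (0:ℝ)..θ, log |2 * sin s|) + ∫ s in (0:ℝ)..θ, log |2 * sin (s + π / 2)| := by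
    rw [← intervalIntegral.integral_add (hII 0 θ)
      (by simpa using (hII (π / 2) (θ + π / 2)).comp_add_right (π / 2))]
    exact intervalIntegral.integral_congr_ae
      (ae_log_abs_two_mul_sin_two_mul.mono fun s hs _ => hs)
  have hshift : ∫ s in (0:ℝ)..θ, log |2 * sin (s + π / 2)| =
      (∫ t in (0:ℝ)..(θ + π / 2), log |2 * sin t|) - ∫ t in (0:ℝ)..(π / 2), log |2 * sin t| := by
    rw [intervalIntegral.integral_comp_add_right (fun t => log |2 * sin t|), zero_add,
      intervalIntegral.integral_interval_sub_left (hII _ _) (hII _ _)]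
  have hscale : ∫ t in (0:ℝ)..(2 * θ), log |2 * sin t| =
      2 * ∫ s in (0:ℝ)..θ, log |2 * sin (2 * s)| := by
    rw [intervalIntegral.integral_comp_mul_left (fun t => log |2 * sin t|) two_ne_zero]
    simp
  simp only [lobachevsky]
  rw [hscale, hsplit, hshift]
  ring

theorem lobachevsky_pi : lobachevsky π = 0 := by
  have h := lobachevsky_two_mul_sub (π / 2)
  rw [mul_div_cancel₀ π two_ne_zero, add_halves] at h
  linarith

theorem lobachevsky_pi_sub (θ : ℝ) : lobachevsky (π - θ) = -lobachevsky θ := by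
  have hII := intervalIntegrable_log_abs_two_mul_sin
  have hsymm : ∫ t in (0:ℝ)..(π - θ), log |2 * sin t| = ∫ t in θ..π, log |2 * sin t| := by
    simpa [sin_pi_sub] using
      intervalIntegral.integral_comp_sub_left (fun t => log |2 * sin t|) π (a := 0) (b := π - θ)
  have h := lobachevsky_pi
  simp only [lobachevsky] at h ⊢
  rw [hsymm, ← intervalIntegral.integral_interval_sub_left (hII 0 π) (hII 0 θ)]
  linarith

theorem lobachevsky_pi_div_two : lobachevsky (π / 2) = 0 := by
  have h := lobachevsky_pi_sub (π / 2)
  rw [sub_half] at h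
  linarith

theorem lobachevsky_two_mul (θ : ℝ) :
    lobachevsky (2 * θ) = 2 * lobachevsky θ + 2 * lobachevsky (θ + π / 2) := by
  rw [lobachevsky_two_mul_sub, lobachevsky_pi_div_two, sub_zero]

/-- Λ(π/6) = (3/2) Λ(π/3). -/
theorem lobachevsky_pi_div_six :
    lobachevsky (Real.pi / 6) = (3 / 2) * lobachevsky (Real.pi / 3) := by
  have hdup := lobachevsky_two_mul (π / 6)
  have hrefl := lobachevsky_pi_sub (π / 3)
  rw [show 2 * (π / 6) = π / 3 by ring] at hdup
  rw [show π - π / 3 = π / 6 + π / 2 by ring] at hrefl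
  linarith
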